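/- arXiv:2403.16121 — 2 statements merged into one kernel-verified Lean document; each statement's English description precedes it below -/
import Mathlib

section
/- Let G¹, G⁰ be finite disjoint index sets, (aⁱ) an assignment of each index to a bin in a finite set 𝔸, (Yⁱ) values in {0,1}, and suppose for every i ∈ G¹ the sum Σ_{j ∈ G⁰, aʲ = aⁱ} Yʲ > 0. Define wⁱ as in CEM. Then for any function Λ : 𝔸 → ℝ, Σ_{i ∈ G⁰} wⁱ Yⁱ Λ(aⁱ) = Σ_{i' ∈ G¹} Y^{i'} Λ(a^{i'}). -/
open Finset

/-- CEM balancing identity against any bin-constant function `Λ`. -/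
theorem cem_weighted_sum_binConstant_eq
    {ι 𝔸 : Type*} [DecidableEq ι] [DecidableEq 𝔸]
    (G1 G0 : Finset ι) (hdisj : Disjoint G1 G0)
    (a : ι → 𝔸) (Y : ι → ℝ) (hY : ∀ i, Y i = 0 ∨ Y i = 1)
    (hpos : ∀ i ∈ G1, 0 < ∑ j ∈ G0.filter (fun j => a j = a i), Y j)
    (w : ι → ℝ)
    (hw : ∀ i ∈ G0, w i = (∑ j ∈ G0.filter (fun j => a j = a i), Y j)⁻¹ *
      ∑ i' ∈ G1.filter (fun i' => a i' = a i), Y i')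
    (Λ : 𝔸 → ℝ) :
    ∑ i ∈ G0, w i * Y i * Λ (a i) = ∑ i' ∈ G1, Y i' * Λ (a i') := by
  classical
  set t := (G0 ∪ G1).image a with ht
  rw [← Finset.sum_fiberwise_of_maps_to (g := a) (t := t)
      (fun i hi => Finset.mem_image_of_mem a (Finset.mem_union_left _ hi)),
    ← Finset.sum_fiberwise_of_maps_to (g := a) (t := t)
      (fun i hi => Finset.mem_image_of_mem a (Finset.mem_union_right _ hi))]
  refine Finset.sum_congr rfl fun b hb => ?_
  set S0 : ℝ := ∑ j ∈ G0.filter (fun j => a j = b), Y j with hS0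
  set S1 : ℝ := ∑ i' ∈ G1.filter (fun i' => a i' = b), Y i' with hS1
  have hL : ∑ i ∈ G0.filter (fun i => a i = b), w i * Y i * Λ (a i)
      = S0 * (S0⁻¹ * S1 * Λ b) := by
    rw [hS0, Finset.sum_mul]
    refine Finset.sum_congr rfl fun i hi => ?_
    have hi0 := (Finset.mem_filter.mp hi).1
    have hab : a i = b := (Finset.mem_filter.mp hi).2
    rw [hw i hi0, hab]
    ring
  have hR : ∑ i' ∈ G1.filter (fun i' => a i' = b), Y i' * Λ (a i') = S1 * Λ b := by
    rw [hS1, Finset.sum_mul]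
    refine Finset.sum_congr rfl fun i hi => ?_
    rw [(Finset.mem_filter.mp hi).2]
  rw [hL, hR]
  rcases eq_or_ne S0 0 with h0 | h0
  · have h1 : S1 = 0 := by
      by_contra h1
      obtain ⟨i', hi'⟩ := Finset.nonempty_of_sum_ne_zero h1
      have hab : a i' = b := (Finset.mem_filter.mp hi').2
      have := hpos i' (Finset.mem_filter.mp hi').1
      rw [hab, ← hS0, h0] at this
      exact lt_irrefl _ this
    rw [h0, h1]; ring
  · field_simp
end

section
/- Let (αⁿ) be a sequence of nonincreasing càdlàg functions on [0, τ] with values in [0,1], and let q : [0, τ] → ℝ be continuous. If αⁿ(s) → q(s) in probability for every s ∈ [0, τ], then sup_{s ∈ [0,τ]} |αⁿ(s) − q(s)| → 0 in probability. -/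
open MeasureTheory Filter Set Topology

/-!
Fix `ε > 0`. By uniform continuity of `q` there is a finite grid `T ⊆ [0, τ]` whose consecutive
points are so close that `q` varies by less than `ε / 3` between them. A nonincreasing function
at `s` is squeezed between its values at the grid points around `s`, so if it is `ε / 3`-close to
`q` on `T` then it is `2ε / 3`-close to `q` everywhere. Hence the event that the supremum is at
least `ε` lies in a finite union of events whose probabilities tend to `0` by pointwise convergence.
-/

theorem exists_finset_subset_Icc_bracket_le (a b : ℝ) {h : ℝ} (hh : 0 < h) :
    ∃ T : Finset ℝ, ↑T ⊆ Icc a b ∧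
      ∀ s ∈ Icc a b, ∃ t₀ ∈ T, ∃ t₁ ∈ T, t₀ ≤ s ∧ s ≤ t₁ ∧ t₁ - t₀ ≤ h := by
  obtain hba | hab := lt_or_ge b a
  · exact ⟨∅, by simp, fun s hs => absurd (hs.1.trans hs.2) hba.not_ge⟩
  set t : ℕ → ℝ := fun i => min (a + i * h) b
  refine ⟨(Finset.range (⌊(b - a) / h⌋₊ + 2)).image t, ?_, fun s hs => ?_⟩
  · rw [Finset.coe_image]
    rintro _ ⟨i, -, rfl⟩
    exact ⟨le_min (le_add_of_nonneg_right (by positivity)) hab, min_le_right _ _⟩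
  set i := ⌊(s - a) / h⌋₊
  have hi : i ≤ ⌊(b - a) / h⌋₊ := Nat.floor_le_floor (by gcongr; exact hs.2)
  have hlo : i * h ≤ s - a :=
    (le_div_iff₀ hh).1 (Nat.floor_le (div_nonneg (sub_nonneg.2 hs.1) hh.le))
  have hhi : s - a < (i + 1) * h := (div_lt_iff₀ hh).1 (Nat.lt_floor_add_one _)
  refine ⟨t i, Finset.mem_image_of_mem _ (by simp; omega),
    t (i + 1), Finset.mem_image_of_mem _ (by simp; omega), ?_, ?_, ?_⟩
  · exact (min_le_left _ _).trans (by linarith)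
  · exact le_min (by push_cast; linarith) hs.2
  · have : t (i + 1) ≤ min (a + i * h + h) (b + h) :=
      min_le_min (by push_cast; linarith) (by linarith)
    rw [min_add_add_right] at this
    linarith

theorem exists_finset_abs_sub_le_of_antitoneOn {a b ε : ℝ} {q : ℝ → ℝ}
    (hq : ContinuousOn q (Icc a b)) (hε : 0 < ε) :
    ∃ T : Finset ℝ, ↑T ⊆ Icc a b ∧ ∀ (f : ℝ → ℝ), AntitoneOn f (Icc a b) → ∀ η,
      (∀ t ∈ T, |f t - q t| ≤ η) → ∀ s ∈ Icc a b, |f s - q s| ≤ η + ε := by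
  obtain ⟨δ, hδ, hqδ⟩ := Metric.uniformContinuousOn_iff.1
    (isCompact_Icc.uniformContinuousOn_of_continuous hq) ε hε
  obtain ⟨T, hTI, hT⟩ := exists_finset_subset_Icc_bracket_le a b (half_pos hδ)
  refine ⟨T, hTI, fun f hf η hfT s hs => ?_⟩
  obtain ⟨t₀, ht₀, t₁, ht₁, hs₀, hs₁, hmesh⟩ := hT s hs
  have hclose : ∀ t ∈ T, |t - s| ≤ δ / 2 → |f t - q s| ≤ η + ε := fun t ht hts =>
    calc |f t - q s| ≤ |f t - q t| + |q t - q s| := abs_sub_le _ _ _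
      _ ≤ η + ε := add_le_add (hfT t ht)
          (hqδ t (hTI ht) s hs (by rw [Real.dist_eq]; linarith)).le
  calc |f s - q s| ≤ max |f t₁ - q s| |f t₀ - q s| :=
        abs_le_max_abs_abs (by gcongr; exact hf hs (hTI ht₁) hs₁)
          (by gcongr; exact hf (hTI ht₀) hs hs₀)
    _ ≤ η + ε := max_le (hclose t₁ ht₁ (by rw [abs_le]; constructor <;> linarith))
        (hclose t₀ ht₀ (by rw [abs_le]; constructor <;> linarith))

theorem tendsto_measure_of_subset_biUnion_finset {Ω ι : Type*} [MeasurableSpace Ω]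
    {μ : Measure Ω} {l : Filter ℕ} {T : Finset ι} {A : ℕ → Set Ω} {B : ℕ → ι → Set Ω}
    (hAB : ∀ n, A n ⊆ ⋃ i ∈ T, B n i) (hB : ∀ i ∈ T, Tendsto (fun n => μ (B n i)) l (𝓝 0)) :
    Tendsto (fun n => μ (A n)) l (𝓝 0) := by
  have hsum : Tendsto (fun n => ∑ i ∈ T, μ (B n i)) l (𝓝 0) := by
    simpa using tendsto_finsetSum T hB
  exact tendsto_of_tendsto_of_tendsto_of_le_of_le tendsto_const_nhds hsum (fun _ => zero_le)
    fun n => (measure_mono (hAB n)).trans (measure_biUnion_finset_le T _)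

theorem uniform_convergence_of_monotone_pointwise_general
    {Ω : Type*} [MeasurableSpace Ω] {μ : Measure Ω}
    (τ : ℝ)
    (α : ℕ → Ω → ℝ → ℝ)
    (hmono : ∀ n ω, AntitoneOn (α n ω) (Set.Icc (0:ℝ) τ))
    (q : ℝ → ℝ) (hq : ContinuousOn q (Set.Icc (0:ℝ) τ))
    (hpt : ∀ s ∈ Set.Icc (0:ℝ) τ, ∀ ε > (0:ℝ),
      Tendsto (fun n => μ {ω | ε ≤ |α n ω s - q s|}) atTop (nhds 0)) :
    ∀ ε > (0:ℝ),
      Tendsto (fun n => μ {ω | ε ≤ ⨆ s : Set.Icc (0:ℝ) τ, |α n ω s - q s|})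
        atTop (nhds 0) := by
  intro ε hε
  obtain ⟨T, hTI, hT⟩ := exists_finset_abs_sub_le_of_antitoneOn hq (by positivity : 0 < ε / 3)
  refine tendsto_measure_of_subset_biUnion_finset (B := fun n t => {ω | ε / 3 ≤ |α n ω t - q t|})
    (fun n ω hω => ?_) fun t ht => hpt t (hTI ht) _ (by positivity)
  by_contra hnear
  simp only [mem_iUnion, mem_ofPred_eq, not_exists, not_le] at hnear
  have hsup : ⨆ s : Icc (0:ℝ) τ, |α n ω s - q s| ≤ ε / 3 + ε / 3 :=
    Real.iSup_le (fun s => hT _ (hmono n ω) _ (fun t ht => (hnear t ht).le) s s.2) (by positivity)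
  have hfar : ε ≤ ⨆ s : Icc (0:ℝ) τ, |α n ω s - q s| := hω
  linarith

/-- Dini/Pólya-type theorem for random monotone functions: if nonincreasing `[0,1]`-valued
random functions converge pointwise in probability to a continuous deterministic limit on
`[0, τ]`, then they converge uniformly in probability. -/
theorem uniform_convergence_of_monotone_pointwise
    {Ω : Type*} [MeasurableSpace Ω] {μ : Measure Ω} [IsProbabilityMeasure μ]
    (τ : ℝ) (hτ : 0 < τ)
    (α : ℕ → Ω → ℝ → ℝ)
    (hmono : ∀ n ω, AntitoneOn (α n ω) (Set.Icc (0:ℝ) τ))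
    (hbd : ∀ n ω, ∀ s ∈ Set.Icc (0:ℝ) τ, α n ω s ∈ Set.Icc (0:ℝ) 1)
    (q : ℝ → ℝ) (hq : ContinuousOn q (Set.Icc (0:ℝ) τ))
    (hpt : ∀ s ∈ Set.Icc (0:ℝ) τ, ∀ ε > (0:ℝ),
      Tendsto (fun n => μ {ω | ε ≤ |α n ω s - q s|}) atTop (nhds 0)) :
    ∀ ε > (0:ℝ),
      Tendsto (fun n => μ {ω | ε ≤ ⨆ s : Set.Icc (0:ℝ) τ, |α n ω s - q s|})
        atTop (nhds 0) :=
  uniform_convergence_of_monotone_pointwise_general τ α hmono q hq hpt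
end
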